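/- Let T be a nonempty finite type, let π, β : T → ℝ and R : T → ℝ with π(τ) ≥ 0 and β(τ) > 0 for all τ and ∑_τ π(τ) = 1. If ∑_τ π(τ)·R(τ) + ∑_τ π(τ)·log β(τ) > 0, then it is not the case that π(τ) = β(τ)·exp(R(τ)) for all τ. (Theorem 4.3, Pareto Improvement Condition) -/
import Mathlib


/-- Theorem 4.3 (Pareto Improvement Condition): if the expected reward plus the
expected log-likelihood is strictly positive, then the policy `p` is not the
Pareto-optimal policy `b·e^R`. -/
theorem pareto_improvement_condition {T : Type*} [Fintype T] [Nonempty T]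
    (p b R : T → ℝ) (hp : ∀ τ, 0 ≤ p τ) (hb : ∀ τ, 0 < b τ)
    (hsum : ∑ τ, p τ = 1)
    (hpos : ∑ τ, p τ * R τ + ∑ τ, p τ * Real.log (b τ) > 0) :
    ¬ (∀ τ, p τ = b τ * Real.exp (R τ)) := by
  intro h
  have hle : ∀ τ, p τ ≤ 1 := by
    intro τ
    rw [← hsum]
    exact Finset.single_le_sum (fun i _ => hp i) (Finset.mem_univ τ)
  have key : ∀ τ, p τ * R τ + p τ * Real.log (b τ) ≤ 0 := by
    intro τ
    rcases eq_or_lt_of_le (hp τ) with h0 | h0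
    · simp [← h0]
    · have hlog : Real.log (p τ) = Real.log (b τ) + R τ := by
        rw [h τ, Real.log_mul (ne_of_gt (hb τ)) (ne_of_gt (Real.exp_pos _)),
          Real.log_exp]
      have hlp : Real.log (p τ) ≤ 0 := Real.log_nonpos (le_of_lt h0) (hle τ)
      have : p τ * (R τ + Real.log (b τ)) ≤ 0 := by
        apply mul_nonpos_of_nonneg_of_nonpos (hp τ)
        linarith [hlog, hlp]
      linarith [this, mul_add (p τ) (R τ) (Real.log (b τ))]
  have : ∑ τ, p τ * R τ + ∑ τ, p τ * Real.log (b τ) ≤ 0 := by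
    rw [← Finset.sum_add_distrib]
    exact Finset.sum_nonpos fun τ _ => key τ
  linarith
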